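/- arXiv:1401.4977 — 19 statements merged into one kernel-verified Lean document; each statement's English description precedes it below -/
import Mathlib

section
/- A set A ⊆ ℕ is thick if and only if every set B ⊆ ℕ is finitely embeddable in A (i.e., A is maximal with respect to ≤_fe, meaning it is a greatest element of the preorder (P(ℕ), ≤_fe)). -/
/-- `A` is finitely embeddable in `B`: every finite subset of `A` has a
rightward translate contained in `B`. -/
def FE (A B : Set ℕ) : Prop :=
  ∀ F : Finset ℕ, (F : Set ℕ) ⊆ A → ∃ k : ℕ, ∀ a ∈ F, k + a ∈ B

/-- A set is thick if it contains arbitrarily long intervals. -/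
def Thick (T : Set ℕ) : Prop :=
  ∀ n : ℕ, ∃ k : ℕ, ∀ i ≤ n, k + i ∈ T

/-- A set is piecewise syndetic if some finite union of its translates is thick. -/
def PWSyndetic (A : Set ℕ) : Prop :=
  ∃ n : ℕ, Thick {m : ℕ | ∃ i ≤ n, ∃ a ∈ A, m = a + i}

/-- Upper Banach density. -/
noncomputable def BD (A : Set ℕ) : ℝ :=
  Filter.atTop.limsup
    (fun n : ℕ => (⨆ k : ℕ, ((A ∩ Set.Icc (k + 1) (k + n)).ncard : ℝ)) / n)

/-- Finite embeddability of ultrafilters. -/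
def UFE (U V : Ultrafilter ℕ) : Prop :=
  ∀ B ∈ V, ∃ A ∈ U, FE A B

/-- `A` contains arbitrarily long arithmetic progressions. -/
def HasAPs (A : Set ℕ) : Prop :=
  ∀ k : ℕ, ∃ a : ℕ, ∃ d ≥ 1, ∀ i < k, a + i * d ∈ A

theorem thick_iff_fe_maximal (A : Set ℕ) :
    Thick A ↔ ∀ B : Set ℕ, FE B A := by
  constructor
  · intro hT B F _
    rcases F.eq_empty_or_nonempty with rfl | hF
    · exact ⟨0, by simp⟩
    · obtain ⟨k, hk⟩ := hT (F.max' hF)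
      exact ⟨k, fun a ha => hk a (F.le_max' a ha)⟩
  · intro h n
    obtain ⟨k, hk⟩ := h Set.univ (Finset.range (n + 1)) (by simp)
    exact ⟨k, fun i hi => hk i (Finset.mem_range.mpr (Nat.lt_succ_of_le hi))⟩
end

section
/- If A, B ⊆ ℕ, A ≤_fe B, and A is piecewise syndetic, then B is piecewise syndetic. -/
theorem fe_pwSyndetic (A B : Set ℕ) (hfe : FE A B) (hA : PWSyndetic A) :
    PWSyndetic B := by
  obtain ⟨n, hT⟩ := hA
  refine ⟨n, fun L => ?_⟩
  obtain ⟨k, hk⟩ := hT L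
  have h : ∀ j : Fin (L + 1), ∃ i ≤ n, ∃ a ∈ A, k + (j : ℕ) = a + i :=
    fun j => hk j (Nat.lt_succ_iff.mp j.2)
  choose i hi a ha heq using h
  obtain ⟨t, ht⟩ := hfe (Finset.image a Finset.univ) (by
    intro x hx
    simp only [Finset.coe_image, Set.mem_image] at hx
    obtain ⟨j, _, rfl⟩ := hx
    exact ha j)
  refine ⟨t + k, fun m hm => ?_⟩
  set j : Fin (L + 1) := ⟨m, Nat.lt_succ_of_le hm⟩
  refine ⟨i j, hi j, t + a j,
    ht _ (Finset.mem_image_of_mem _ (Finset.mem_univ j)), ?_⟩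
  have h1 := heq j
  have h2 : (j : ℕ) = m := rfl
  omega
end

section
/- If A, B ⊆ ℕ and A ≤_fe B, then the upper Banach densities satisfy BD(A) ≤ BD(B). -/
lemma ncard_window_le (A : Set ℕ) (k n : ℕ) :
    (A ∩ Set.Icc (k + 1) (k + n)).ncard ≤ n := by
  calc (A ∩ Set.Icc (k + 1) (k + n)).ncard
      ≤ (Set.Icc (k + 1) (k + n)).ncard :=
        Set.ncard_le_ncard Set.inter_subset_right (Set.finite_Icc _ _)
    _ = n := by rw [← Finset.coe_Icc, Set.ncard_coe_finset, Nat.card_Icc]; omega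

lemma key_trans (A B : Set ℕ) (hfe : FE A B) (n k : ℕ) : ∃ m : ℕ,
    (A ∩ Set.Icc (k + 1) (k + n)).ncard ≤ (B ∩ Set.Icc (m + 1) (m + n)).ncard := by
  have hfin : (A ∩ Set.Icc (k + 1) (k + n)).Finite :=
    (Set.finite_Icc _ _).subset Set.inter_subset_right
  obtain ⟨m, hm⟩ := hfe hfin.toFinset
    (by intro x hx; rw [Set.Finite.coe_toFinset] at hx; exact hx.1)
  refine ⟨m + k, ?_⟩
  have himg : (fun x => m + x) '' (A ∩ Set.Icc (k + 1) (k + n)) ⊆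
      B ∩ Set.Icc (m + k + 1) (m + k + n) := by
    rintro _ ⟨x, hx, rfl⟩
    refine ⟨hm x (hfin.mem_toFinset.mpr hx), ?_⟩
    obtain ⟨hx1, hx2⟩ := hx.2
    simp only
    constructor <;> omega
  calc (A ∩ Set.Icc (k + 1) (k + n)).ncard
      = ((fun x => m + x) '' (A ∩ Set.Icc (k + 1) (k + n))).ncard :=
        (Set.ncard_image_of_injective _ (add_right_injective m)).symm
    _ ≤ (B ∩ Set.Icc (m + k + 1) (m + k + n)).ncard :=
        Set.ncard_le_ncard himg ((Set.finite_Icc _ _).subset Set.inter_subset_right)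

theorem fe_banach_density_le (A B : Set ℕ) (hfe : FE A B) : BD A ≤ BD B := by
  have hbddB : ∀ n : ℕ, BddAbove (Set.range fun k : ℕ =>
      ((B ∩ Set.Icc (k + 1) (k + n)).ncard : ℝ)) := by
    intro n
    refine ⟨n, ?_⟩
    rintro _ ⟨k, rfl⟩
    simp only
    exact_mod_cast ncard_window_le B k n
  have hsup : ∀ n : ℕ,
      (⨆ k : ℕ, ((A ∩ Set.Icc (k + 1) (k + n)).ncard : ℝ)) ≤
      (⨆ k : ℕ, ((B ∩ Set.Icc (k + 1) (k + n)).ncard : ℝ)) := by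
    intro n
    refine ciSup_le fun k => ?_
    obtain ⟨m, hm⟩ := key_trans A B hfe n k
    exact le_trans (by exact_mod_cast hm) (le_ciSup (hbddB n) m)
  have hpt : ∀ n : ℕ,
      (⨆ k : ℕ, ((A ∩ Set.Icc (k + 1) (k + n)).ncard : ℝ)) / n ≤
      (⨆ k : ℕ, ((B ∩ Set.Icc (k + 1) (k + n)).ncard : ℝ)) / n := by
    intro n
    rcases Nat.eq_zero_or_pos n with rfl | hn
    · simp
    · exact div_le_div_of_nonneg_right (hsup n) (Nat.cast_nonneg n)
  refine Filter.limsup_le_limsup (Filter.Eventually.of_forall hpt) ?_ ?_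
  · refine Filter.isCoboundedUnder_le_of_le (Filter.atTop : Filter ℕ) (x := 0) fun n => ?_
    exact div_nonneg (Real.iSup_nonneg fun k => Nat.cast_nonneg _) (Nat.cast_nonneg n)
  · refine Filter.isBoundedUnder_of ⟨1, fun n : ℕ => ?_⟩
    rcases Nat.eq_zero_or_pos n with rfl | hn
    · simp
    · rw [div_le_iff₀ (by exact_mod_cast hn), one_mul]
      refine ciSup_le fun k => ?_
      exact_mod_cast ncard_window_le B k n
end

section
/- If A, B ⊆ ℕ and A ≤_fe B, then A − A ⊆ B − B, where for a set X ⊆ ℕ the difference set X − X is {d ∈ ℕ : there exist x, y ∈ X with y = x + d}. -/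
theorem fe_diff_subset (A B : Set ℕ) (hfe : FE A B) :
    {d : ℕ | ∃ x ∈ A, x + d ∈ A} ⊆ {d : ℕ | ∃ x ∈ B, x + d ∈ B} := by
  rintro d ⟨x, hx, hxd⟩
  obtain ⟨k, hk⟩ := hfe {x, x + d} (by
    intro a ha
    simp only [Finset.coe_insert, Finset.coe_singleton, Set.mem_insert_iff,
      Set.mem_singleton_iff] at ha
    rcases ha with rfl | rfl <;> assumption)
  exact ⟨k + x, hk x (by simp), by rw [add_assoc]; exact hk (x + d) (by simp)⟩
end

section
/- Let A, B ⊆ ℕ. Then: (i) if B is not finitely embeddable in A but B ≤_fe A + 1, then B ⊆ A + 1; (ii) if A ≤_fe B but A + 1 is not finitely embeddable in B, then A ⊆ B. Here A + 1 = {a + 1 : a ∈ A}. -/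
theorem fe_basic_lemma (A B : Set ℕ) :
    (¬ FE B A → FE B ((· + 1) '' A) → B ⊆ (· + 1) '' A) ∧
    (FE A B → ¬ FE ((· + 1) '' A) B → A ⊆ B) := by
  constructor
  · intro hBA hBA1 b hb
    unfold FE at hBA
    push_neg at hBA
    obtain ⟨F, hFB, hF⟩ := hBA
    obtain ⟨k, hk⟩ := hBA1 (F ∪ {b}) (by
      intro x hx
      simp only [Finset.coe_union, Finset.coe_singleton, Set.mem_union,
        Set.mem_singleton_iff] at hx
      rcases hx with hx | rfl
      · exact hFB hx
      · exact hb)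
    rcases Nat.eq_zero_or_pos k with rfl | hkpos
    · have := hk b (Finset.mem_union_right _ (Finset.mem_singleton_self b))
      simpa using this
    · exfalso
      obtain ⟨f, hfF, hf⟩ := hF (k - 1)
      have : k + f ∈ (· + 1) '' A := hk f (Finset.mem_union_left _ hfF)
      obtain ⟨a, ha, hae⟩ := this
      beta_reduce at hae
      apply hf
      have : k - 1 + f = a := by omega
      rwa [this]
  · intro hAB hA1B a ha
    unfold FE at hA1B
    push_neg at hA1B
    obtain ⟨F, hFA1, hF⟩ := hA1B
    obtain ⟨k, hk⟩ := hAB (F.image (· - 1) ∪ {a}) (by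
      intro x hx
      simp only [Finset.coe_union, Finset.coe_image, Finset.coe_singleton,
        Set.mem_union, Set.mem_image, Set.mem_singleton_iff] at hx
      rcases hx with ⟨f, hfF, rfl⟩ | rfl
      · obtain ⟨a', ha', hae⟩ := hFA1 hfF
        beta_reduce at hae
        have : f - 1 = a' := by omega
        rwa [this]
      · exact ha)
    rcases Nat.eq_zero_or_pos k with rfl | hkpos
    · have := hk a (Finset.mem_union_right _ (Finset.mem_singleton_self a))
      simpa using this
    · exfalso
      obtain ⟨f, hfF, hf⟩ := hF (k - 1)
      have hfA1 := hFA1 hfF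
      obtain ⟨a', ha', hae⟩ := hfA1
      beta_reduce at hae
      have h1 : k + (f - 1) ∈ B :=
        hk (f - 1) (Finset.mem_union_left _ (Finset.mem_image_of_mem _ hfF))
      apply hf
      have : k - 1 + f = k + (f - 1) := by omega
      rwa [this]
end

section
/- Let A, B ⊆ ℕ be such that A is nonempty. If A ≤_fe B and B ≤_fe A + 1, then either B ≡_fe A or B ≡_fe A + 1, where A + 1 = {a + 1 : a ∈ A}. (In other words, there is no set strictly between A and A + 1 in the finite embeddability preorder.) -/
theorem fe_no_strictly_between (A B : Set ℕ) (hA : A.Nonempty)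
    (h1 : FE A B) (h2 : FE B ((· + 1) '' A)) :
    (FE B A ∧ FE A B) ∨ (FE B ((· + 1) '' A) ∧ FE ((· + 1) '' A) B) := by
  by_cases hsub : B ⊆ ((· + 1) '' A)
  · -- B ⊆ A+1 : show FE (A+1) B
    right
    refine ⟨h2, ?_⟩
    intro G hG
    -- key induction
    have key : ∀ j : ℕ, (∃ k, ∀ g ∈ G, k + g ∈ B) ∨
        (∀ i, 1 ≤ i → i ≤ j → ∀ g ∈ G, ∃ a ∈ A, g = a + i) := by
      intro j
      induction j with
      | zero => right; intro i h1i h2i; omega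
      | succ j ih =>
        rcases ih with h | hinv
        · exact Or.inl h
        by_cases hj : j = 0
        · subst hj
          right
          intro i h1i h2i g hg
          have : i = 1 := by omega
          subst this
          obtain ⟨a, haA, hae⟩ := hG hg
          have hae2 : a + 1 = g := hae
          exact ⟨a, haA, by omega⟩
        · -- j ≥ 1
          have hj1 : 1 ≤ j := by omega
          set U : Finset ℕ := Finset.image (fun p : ℕ × ℕ => p.1 - p.2)
            (G ×ˢ Finset.Icc 1 j) with hU
          have hUA : (U : Set ℕ) ⊆ A := by
            intro x hx
            simp only [hU, Finset.coe_image, Set.mem_image, Finset.mem_coe,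
              Finset.mem_product, Finset.mem_Icc] at hx
            obtain ⟨⟨g, i⟩, ⟨hgG, hi1, hi2⟩, hxe⟩ := hx
            obtain ⟨a, haA, hae⟩ := hinv i hi1 hi2 g hgG
            have : x = a := by simp only [← hxe]; omega
            rwa [this]
          obtain ⟨m, hm⟩ := h1 U hUA
          have helper : ∀ g ∈ G, ∀ i, 1 ≤ i → i ≤ j → m + (g - i) ∈ B := by
            intro g hg i hi1 hi2
            apply hm
            simp only [hU, Finset.mem_image, Finset.mem_product, Finset.mem_Icc]
            exact ⟨⟨g, i⟩, ⟨hg, hi1, hi2⟩, rfl⟩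
          by_cases hm0 : m = 0
          · right
            intro i h1i h2i g hg
            by_cases hij : i ≤ j
            · exact hinv i h1i hij g hg
            · have hij1 : i = j + 1 := by omega
              subst hij1
              have hgB : g - j ∈ B := by
                have := helper g hg j hj1 le_rfl
                rwa [hm0, Nat.zero_add] at this
              obtain ⟨a, haA, hae⟩ := hsub hgB
              obtain ⟨a', _, hae'⟩ := hinv j hj1 le_rfl g hg
              exact ⟨a, haA, by simp only at hae; omega⟩
          · by_cases hmj : m ≤ j
            · left
              refine ⟨0, fun g hg => ?_⟩
              have hmem := helper g hg m (by omega) hmj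
              obtain ⟨a', _, hae'⟩ := hinv m (by omega) hmj g hg
              have : m + (g - m) = 0 + g := by omega
              rwa [this] at hmem
            · left
              refine ⟨m - j, fun g hg => ?_⟩
              have hmem := helper g hg j hj1 le_rfl
              obtain ⟨a', _, hae'⟩ := hinv j hj1 le_rfl g hg
              have : m + (g - j) = m - j + g := by omega
              rwa [this] at hmem
    rcases G.eq_empty_or_nonempty with hGe | hGne
    · exact ⟨0, by simp [hGe]⟩
    · rcases key (G.min' hGne + 1) with h | hinv
      · exact h
      · exfalso
        obtain ⟨a, _, hae⟩ := hinv (G.min' hGne + 1) (by omega) le_rfl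
          (G.min' hGne) (G.min'_mem hGne)
        omega
  · -- ∃ b ∈ B, b ∉ A+1 : show FE B A
    left
    refine ⟨?_, h1⟩
    obtain ⟨b, hbB, hbA1⟩ := Set.not_subset.mp hsub
    intro F hF
    obtain ⟨t, ht⟩ := h2 (insert b F) (by
      intro x hx
      simp only [Finset.coe_insert, Set.mem_insert_iff] at hx
      rcases hx with rfl | hx
      · exact hbB
      · exact hF hx)
    have htb := ht b (Finset.mem_insert_self b F)
    match t, htb with
    | 0, htb => exact absurd (by simpa using htb) hbA1
    | (s+1), _ =>
      refine ⟨s, fun a ha => ?_⟩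
      have := ht a (Finset.mem_insert_of_mem ha)
      obtain ⟨x, hxA, hxe⟩ := this
      simp only at hxe
      have : s + a = x := by omega
      rwa [this]
end

section
/- Let n ≥ 1 and let A ⊆ ℕ with |A| ≥ n. Then A is minimal in ({X ⊆ ℕ : |X| ≥ n}, ≤_fe) — i.e., every B ⊆ ℕ with |B| ≥ n and B ≤_fe A satisfies A ≤_fe B — if and only if 0 ∈ A and |A| = n. -/
/-!
Minimality forces `A` to embed into a normalized `n`-element piece of itself (a finite subset
`F ⊆ A` translated down so that it contains `0`), so `A` has exactly `n` elements; a translate of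
an `n`-element set inside an `n`-element set is all of it, and a translate `k + A` containing `0`
has `k = 0`. Conversely, if `0 ∈ A` and `|A| = n`, every `n`-element subset of a set `B ≤_fe A`
translates onto `A` with shift `0`, so `A ⊆ B`.
-/

open Set

namespace FE

theorem refl (A : Set ℕ) : FE A A :=
  fun _ hF => ⟨0, fun a ha => by simpa using hF ha⟩

theorem mono_left {A B C : Set ℕ} (h : FE B C) (hAB : A ⊆ B) : FE A C :=
  fun F hF => h F (hF.trans hAB)

theorem mono_right {A B C : Set ℕ} (h : FE A B) (hBC : B ⊆ C) : FE A C :=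
  fun F hF => (h F hF).imp fun _ hk a ha => hBC (hk a ha)

theorem of_subset {A B : Set ℕ} (h : A ⊆ B) : FE A B :=
  (refl A).mono_right h

theorem exists_image_add_subset {A B : Set ℕ} (h : FE A B) (hA : A.Finite) :
    ∃ k, (k + ·) '' A ⊆ B := by
  obtain ⟨k, hk⟩ := h hA.toFinset (by simp)
  exact ⟨k, image_subset_iff.mpr fun a ha => hk a (hA.mem_toFinset.mpr ha)⟩

theorem encard_le {A B : Set ℕ} (h : FE A B) : A.encard ≤ B.encard := by
  refine ENat.forall_natCast_le_iff_le.mp fun m hm => ?_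
  obtain ⟨S, hSA, hS⟩ := exists_subset_encard_eq hm
  obtain ⟨k, hk⟩ := (h.mono_left hSA).exists_image_add_subset (finite_of_encard_eq_coe hS)
  calc (m : ℕ∞) = ((k + ·) '' S).encard := by rw [(add_right_injective k).encard_image, hS]
    _ ≤ B.encard := encard_mono hk

theorem eq_of_zero_mem {A B : Set ℕ} (h : FE A B) (hA : A.Finite)
    (hBA : B.encard ≤ A.encard) (hB : 0 ∈ B) : A = B := by
  obtain ⟨k, hk⟩ := h.exists_image_add_subset hA
  have hkA : (k + ·) '' A = B :=
    (hA.image _).eq_of_subset_of_encard_le hk (by rwa [(add_right_injective k).encard_image])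
  obtain ⟨a, -, hka : k + a = 0⟩ := hkA ▸ hB
  obtain rfl : k = 0 := by omega
  simpa using hkA

end FE

theorem exists_zero_mem_encard_eq_fe {F : Set ℕ} (hF : F.Nonempty) :
    ∃ B, 0 ∈ B ∧ B.encard = F.encard ∧ FE B F := by
  set m := sInf F
  have hF_range : F ⊆ range (m + ·) := fun f hf =>
    ⟨f - m, Nat.add_sub_cancel' (Nat.sInf_le hf)⟩
  refine ⟨(m + ·) ⁻¹' F, by simpa [m] using Nat.sInf_mem hF,
    encard_preimage_of_injective_subset_range (add_right_injective m) hF_range,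
    fun G hG => ⟨m, fun a ha => hG ha⟩⟩

theorem fe_minimal_iff (n : ℕ) (hn : 1 ≤ n) (A : Set ℕ) (hA : (n : ℕ∞) ≤ A.encard) :
    (∀ B : Set ℕ, (n : ℕ∞) ≤ B.encard → FE B A → FE A B) ↔
      (0 ∈ A ∧ A.encard = n) := by
  constructor
  · intro hmin
    obtain ⟨F, hFA, hF⟩ := exists_subset_encard_eq hA
    have hF_ne : F.Nonempty := by
      rw [← encard_pos, hF]
      exact_mod_cast hn
    obtain ⟨B, hB0, hBF, hBF_fe⟩ := exists_zero_mem_encard_eq_fe hF_ne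
    rw [hF] at hBF
    have hAB : FE A B := hmin B hBF.ge (hBF_fe.mono_right hFA)
    have hA_eq : A.encard = n := le_antisymm (hBF ▸ hAB.encard_le) hA
    obtain rfl := hAB.eq_of_zero_mem (finite_of_encard_eq_coe hA_eq) (by rw [hBF, hA_eq]) hB0
    exact ⟨hB0, hA_eq⟩
  · rintro ⟨hA0, hA_eq⟩ B hB hBA
    obtain ⟨G, hGB, hG⟩ := exists_subset_encard_eq hB
    obtain rfl : G = A := (hBA.mono_left hGB).eq_of_zero_mem (finite_of_encard_eq_coe hG)
      (by rw [hG, hA_eq]) hA0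
    exact FE.of_subset hGB
end

section
/- For every infinite set X ⊆ ℕ there exist infinite sets A, B ⊆ X with A ∩ B = ∅ such that A and B are strongly mutually unembeddable, i.e., for every two-element subset C of A, C is not finitely embeddable in B, and for every two-element subset D of B, D is not finitely embeddable in A. -/
namespace SMU

noncomputable def seq (X : Set ℕ) (hX : X.Infinite) : ℕ → ℕ
  | 0 => (hX.exists_gt 0).choose
  | n+1 => (hX.exists_gt (2 * seq X hX n)).choose

lemma seq_mem (X : Set ℕ) (hX : X.Infinite) : ∀ n, seq X hX n ∈ X
  | 0 => (hX.exists_gt 0).choose_spec.1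
  | n+1 => (hX.exists_gt (2 * seq X hX n)).choose_spec.1

lemma seq_growth (X : Set ℕ) (hX : X.Infinite) (n : ℕ) :
    2 * seq X hX n < seq X hX (n+1) :=
  (hX.exists_gt (2 * seq X hX n)).choose_spec.2

lemma seq_mono (X : Set ℕ) (hX : X.Infinite) : StrictMono (seq X hX) :=
  strictMono_nat_of_lt_succ fun n => by have := seq_growth X hX n; omega

lemma seq_diff_eq (X : Set ℕ) (hX : X.Infinite) {i j i' j' : ℕ} (hij : i < j) (hij' : i' < j')
    (h : seq X hX j - seq X hX i = seq X hX j' - seq X hX i') : j = j' := by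
  by_contra hne
  wlog hlt : j < j' generalizing i j i' j'
  · exact this hij' hij h.symm (Ne.symm hne) (by omega)
  have h1 : seq X hX j ≤ seq X hX (j' - 1) := (seq_mono X hX).monotone (by omega)
  have h2 : 2 * seq X hX (j' - 1) < seq X hX j' := by
    have := seq_growth X hX (j' - 1)
    rwa [Nat.sub_add_cancel (by omega)] at this
  have h3 : seq X hX i' ≤ seq X hX (j' - 1) := (seq_mono X hX).monotone (by omega)
  have h4 : seq X hX i < seq X hX j := seq_mono X hX hij
  omega

lemma no_shift (X : Set ℕ) (hX : X.Infinite) {u v w z k : ℕ} (huv : u < v)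
    (h1 : k + seq X hX u = seq X hX w) (h2 : k + seq X hX v = seq X hX z) : v = z := by
  have huv' : seq X hX u < seq X hX v := seq_mono X hX huv
  have hwz : w < z := (seq_mono X hX).lt_iff_lt.mp (by omega)
  exact seq_diff_eq X hX huv hwz (by omega)

end SMU

theorem exists_strongly_mutually_unembeddable (X : Set ℕ) (hX : X.Infinite) :
    ∃ A B : Set ℕ, A ⊆ X ∧ B ⊆ X ∧ A.Infinite ∧ B.Infinite ∧ A ∩ B = ∅ ∧
      (∀ C : Set ℕ, C ⊆ A → C.encard = 2 → ¬ FE C B) ∧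
      (∀ D : Set ℕ, D ⊆ B → D.encard = 2 → ¬ FE D A) := by
  have hinj := (SMU.seq_mono X hX).injective
  refine ⟨Set.range (fun n => SMU.seq X hX (2*n)), Set.range (fun n => SMU.seq X hX (2*n+1)),
    ?_, ?_, ?_, ?_, ?_, ?_, ?_⟩
  · rintro x ⟨n, rfl⟩; exact SMU.seq_mem X hX _
  · rintro x ⟨n, rfl⟩; exact SMU.seq_mem X hX _
  · exact Set.infinite_range_of_injective (fun a b hab => by
      have := hinj hab; omega)
  · exact Set.infinite_range_of_injective (fun a b hab => by
      have := hinj hab; omega)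
  · rw [Set.eq_empty_iff_forall_notMem]
    rintro x ⟨⟨m, hm⟩, ⟨n, hn⟩⟩
    have hmx : SMU.seq X hX (2*m) = x := hm
    have hnx : SMU.seq X hX (2*n+1) = x := hn
    have : 2*m = 2*n+1 := hinj (by rw [hmx, hnx])
    omega
  · rintro C hC h2 hFE
    obtain ⟨c1, c2, hne, rfl⟩ := Set.encard_eq_two.mp h2
    obtain ⟨m, hm⟩ := hC (Set.mem_insert _ _)
    obtain ⟨n, hn⟩ := hC (Set.mem_insert_of_mem _ rfl)
    obtain ⟨k, hk⟩ := hFE {c1, c2} (by simp)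
    obtain ⟨p, hp⟩ := hk c1 (by simp)
    obtain ⟨q, hq⟩ := hk c2 (by simp)
    have hm' : SMU.seq X hX (2*m) = c1 := hm
    have hn' : SMU.seq X hX (2*n) = c2 := hn
    have hp' : SMU.seq X hX (2*p+1) = k + c1 := hp
    have hq' : SMU.seq X hX (2*q+1) = k + c2 := hq
    have hmn : m ≠ n := fun h => hne (by rw [← hm', ← hn', h])
    rcases lt_or_gt_of_ne hmn with h | h
    · have := SMU.no_shift X hX (w := 2*p+1) (z := 2*q+1) (k := k)
        (show 2*m < 2*n by omega) (by omega) (by omega)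
      omega
    · have := SMU.no_shift X hX (w := 2*q+1) (z := 2*p+1) (k := k)
        (show 2*n < 2*m by omega) (by omega) (by omega)
      omega
  · rintro D hD h2 hFE
    obtain ⟨c1, c2, hne, rfl⟩ := Set.encard_eq_two.mp h2
    obtain ⟨m, hm⟩ := hD (Set.mem_insert _ _)
    obtain ⟨n, hn⟩ := hD (Set.mem_insert_of_mem _ rfl)
    obtain ⟨k, hk⟩ := hFE {c1, c2} (by simp)
    obtain ⟨p, hp⟩ := hk c1 (by simp)
    obtain ⟨q, hq⟩ := hk c2 (by simp)
    have hm' : SMU.seq X hX (2*m+1) = c1 := hm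
    have hn' : SMU.seq X hX (2*n+1) = c2 := hn
    have hp' : SMU.seq X hX (2*p) = k + c1 := hp
    have hq' : SMU.seq X hX (2*q) = k + c2 := hq
    have hmn : m ≠ n := fun h => hne (by rw [← hm', ← hn', h])
    rcases lt_or_gt_of_ne hmn with h | h
    · have := SMU.no_shift X hX (w := 2*p) (z := 2*q) (k := k)
        (show 2*m+1 < 2*n+1 by omega) (by omega) (by omega)
      omega
    · have := SMU.no_shift X hX (w := 2*q) (z := 2*p) (k := k)
        (show 2*n+1 < 2*m+1 by omega) (by omega) (by omega)
      omega
end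

section
/- For every infinite set X ⊆ ℕ there exists an infinite set A ⊆ X such that X is not finitely embeddable in A. -/
theorem exists_infinite_subset_not_fe (X : Set ℕ) (hX : X.Infinite) :
    ∃ A : Set ℕ, A ⊆ X ∧ A.Infinite ∧ ¬ FE X A := by
  obtain ⟨f, hfX, hfgt⟩ : ∃ f : ℕ → ℕ, (∀ n, f n ∈ X) ∧ (∀ n, n < f n) := by
    choose f h1 h2 using fun n => hX.exists_gt n
    exact ⟨f, h1, h2⟩
  -- two elements of X
  obtain ⟨x0, hx0⟩ := hX.nonempty
  set x1 := f x0 with hx1def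
  have hx1 : x1 ∈ X := hfX x0
  have hlt : x0 < x1 := hfgt x0
  set d := x1 - x0 with hd
  have hdpos : 0 < d := Nat.sub_pos_of_lt hlt
  -- sparse sequence
  set g : ℕ → ℕ := fun n => Nat.rec (f 0) (fun _ p => f (p + d)) n with hg
  have hgX : ∀ n, g n ∈ X := by
    intro n; cases n with
    | zero => exact hfX 0
    | succ m => exact hfX _
  have hstep : ∀ n, g n + d < g (n + 1) := fun n => hfgt (g n + d)
  have hgap : ∀ m n, m < n → g m + d < g n := by
    intro m n h
    induction n with
    | zero => omega
    | succ k ih =>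
      rcases Nat.lt_succ_iff_lt_or_eq.mp h with h' | h'
      · have := hstep k; have := ih h'; omega
      · subst h'; exact hstep m
  have hmono : StrictMono g := by
    intro m n h; have := hgap m n h; omega
  refine ⟨Set.range g, ?_, ?_, ?_⟩
  · rintro _ ⟨n, rfl⟩; exact hgX n
  · exact Set.infinite_range_of_injective hmono.injective
  · intro hFE
    obtain ⟨k, hk⟩ := hFE {x0, x1} (by
      intro a ha
      simp only [Finset.coe_insert, Finset.coe_singleton, Set.mem_insert_iff,
        Set.mem_singleton_iff] at ha
      rcases ha with rfl | rfl
      · exact hx0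
      · exact hx1)
    obtain ⟨m, hm⟩ := hk x0 (by simp)
    obtain ⟨n, hn⟩ := hk x1 (by simp)
    have hne : m < n := by
      have : g m < g n := by omega
      exact hmono.lt_iff_lt.mp this
    have := hgap m n hne
    omega
end

section
/- For every infinite set X ⊆ ℕ there exists a sequence (X_i)_{i∈ℕ} of infinite subsets of ℕ with X_0 = X, X_{i+1} ⊊ X_i for every i, and such that X_i is not finitely embeddable in X_{i+1} for every i (an infinite strictly descending chain in the finite embeddability preorder). -/
lemma fe_step (S : Set ℕ) (hS : S.Infinite) :
    ∃ T : Set ℕ, T ⊂ S ∧ T.Infinite ∧ ¬ FE S T := by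
  obtain ⟨a, ha⟩ := hS.nonempty
  obtain ⟨b, hb, hab⟩ := hS.exists_gt a
  set d := b - a with hd
  have hdpos : 0 < d := Nat.sub_pos_of_lt hab
  have hbad : b = a + d := by omega
  have H : ∀ m : ℕ, ∃ x ∈ S, m < x := fun m => hS.exists_gt m
  set g : ℕ → ℕ := fun n => Nat.rec a (fun _ p => (H (p + d)).choose) n with hg
  have hg0 : g 0 = a := rfl
  have hgsucc : ∀ n, g (n + 1) = (H (g n + d)).choose := fun n => rfl
  have hgS : ∀ n, g n ∈ S := by
    intro n
    cases n with
    | zero => exact ha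
    | succ m => exact (H (g m + d)).choose_spec.1
  have hgap : ∀ n, g n + d < g (n + 1) := by
    intro n
    exact (H (g n + d)).choose_spec.2
  have hmono : StrictMono g := strictMono_nat_of_lt_succ (fun n => by have := hgap n; omega)
  have hgapgen : ∀ m n, m < n → g m + d < g n := by
    intro m n hmn
    have h1 := hgap m
    have h2 : g (m + 1) ≤ g n := hmono.le_iff_le.mpr hmn
    omega
  refine ⟨Set.range g, ?_, Set.infinite_range_of_injective hmono.injective, ?_⟩
  · constructor
    · rintro x ⟨n, rfl⟩; exact hgS n
    · intro hsub
      obtain ⟨m, hm⟩ := hsub ha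
      obtain ⟨n, hn⟩ := hsub hb
      rcases lt_trichotomy m n with h | h | h
      · have := hgapgen m n h; omega
      · subst h; omega
      · have := hgapgen n m h; omega
  · intro hFE
    obtain ⟨k, hk⟩ := hFE {a, b} (by
      intro x hx
      simp only [Finset.coe_insert, Finset.coe_singleton, Set.mem_insert_iff,
        Set.mem_singleton_iff] at hx
      rcases hx with rfl | rfl
      · exact ha
      · exact hb)
    have h1 : k + a ∈ Set.range g := hk a (by simp)
    have h2 : k + b ∈ Set.range g := hk b (by simp)
    obtain ⟨m, hm⟩ := h1
    obtain ⟨n, hn⟩ := h2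
    rcases lt_trichotomy m n with h | h | h
    · have := hgapgen m n h; omega
    · subst h; omega
    · have := hgapgen n m h; omega

theorem exists_descending_fe_chain (X : Set ℕ) (hX : X.Infinite) :
    ∃ f : ℕ → Set ℕ, f 0 = X ∧ (∀ i : ℕ, (f i).Infinite) ∧
      (∀ i : ℕ, f (i + 1) ⊂ f i) ∧ (∀ i : ℕ, ¬ FE (f i) (f (i + 1))) := by
  let step : {S : Set ℕ // S.Infinite} → {S : Set ℕ // S.Infinite} :=
    fun p => ⟨(fe_step p.1 p.2).choose, (fe_step p.1 p.2).choose_spec.2.1⟩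
  let F : ℕ → {S : Set ℕ // S.Infinite} := fun i => step^[i] ⟨X, hX⟩
  refine ⟨fun i => (F i).1, rfl, fun i => (F i).2, ?_, ?_⟩
  all_goals intro i
  · have : F (i + 1) = step (F i) := Function.iterate_succ_apply' step i _
    show (F (i + 1)).1 ⊂ (F i).1
    rw [this]
    exact (fe_step (F i).1 (F i).2).choose_spec.1
  · have : F (i + 1) = step (F i) := Function.iterate_succ_apply' step i _
    show ¬ FE (F i).1 (F (i + 1)).1
    rw [this]
    exact (fe_step (F i).1 (F i).2).choose_spec.2.2
end

section
/- There are no minimal elements among infinite subsets of ℕ modulo ≡_fe: for every infinite set A ⊆ ℕ there exists an infinite set B ⊆ ℕ such that B ≤_fe A but A is not finitely embeddable in B. -/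
/-- In an infinite set `A` one can find a sequence whose consecutive terms
are elements of `A` separated by more than `d`. -/
lemma exists_sparse_seq (A : Set ℕ) (hA : A.Infinite) (d : ℕ) :
    ∃ f : ℕ → ℕ, (∀ n, f n ∈ A) ∧ ∀ n, f n + d < f (n + 1) := by
  classical
  let f : ℕ → ℕ := fun n =>
    Nat.rec (hA.exists_gt 0).choose
      (fun _ prev => (hA.exists_gt (prev + d)).choose) n
  refine ⟨f, ?_, ?_⟩
  · intro n
    cases n with
    | zero => exact (hA.exists_gt 0).choose_spec.1
    | succ m => exact (hA.exists_gt (f m + d)).choose_spec.1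
  · intro n
    exact (hA.exists_gt (f n + d)).choose_spec.2

lemma sparse_gap {f : ℕ → ℕ} {d : ℕ} (hf : ∀ n, f n + d < f (n + 1)) :
    ∀ m n, m < n → f m + d < f n := by
  intro m n hmn
  induction n with
  | zero => omega
  | succ k ih =>
    rcases Nat.lt_succ_iff_lt_or_eq.mp hmn with h | h
    · have := ih h
      have h2 := hf k
      omega
    · subst h; exact hf m

theorem no_minimal_infinite_sets (A : Set ℕ) (hA : A.Infinite) :
    ∃ B : Set ℕ, B.Infinite ∧ FE B A ∧ ¬ FE A B := by
  classical
  -- two elements of A with positive difference d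
  obtain ⟨a₀, ha₀⟩ := hA.nonempty
  obtain ⟨a₁, ha₁, hlt⟩ := hA.exists_gt a₀
  set d : ℕ := a₁ - a₀ with hd
  have hdpos : 0 < d := by omega
  obtain ⟨f, hfA, hgap⟩ := exists_sparse_seq A hA d
  have hmono : StrictMono f := by
    intro m n hmn
    have := sparse_gap hgap m n hmn
    omega
  refine ⟨Set.range f, ?_, ?_, ?_⟩
  · exact Set.infinite_range_of_injective hmono.injective
  · intro F hF
    refine ⟨0, fun a haF => ?_⟩
    simp only [zero_add]
    obtain ⟨n, rfl⟩ := hF haF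
    exact hfA n
  · intro hFE
    obtain ⟨k, hk⟩ := hFE {a₀, a₁} (by
      intro x hx
      simp only [Finset.coe_insert, Finset.coe_singleton, Set.mem_insert_iff,
        Set.mem_singleton_iff] at hx
      rcases hx with rfl | rfl
      · exact ha₀
      · exact ha₁)
    have h0 : k + a₀ ∈ Set.range f := hk a₀ (by simp)
    have h1 : k + a₁ ∈ Set.range f := hk a₁ (by simp)
    obtain ⟨m, hm⟩ := h0
    obtain ⟨n, hn⟩ := h1
    have hmn : m < n := by
      by_contra h
      push_neg at h
      rcases lt_or_eq_of_le h with h | h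
      · have := sparse_gap hgap n m h; omega
      · subst h; omega
    have := sparse_gap hgap m n hmn
    omega
end

section
/- Let U, V be ultrafilters on ℕ, and let U ⊕ 1 denote the ultrafilter {A ⊆ ℕ : {n ∈ ℕ : n + 1 ∈ A} ∈ U} (the image of U under the map n ↦ n + 1). If U ≤_fe V and V ≤_fe U ⊕ 1, then either V ≡_fe U or V ≡_fe U ⊕ 1. -/
/-- Monotonicity of `FE` in the target. -/
lemma FE.mono_right_s11 {A B C : Set ℕ} (h : FE A B) (hBC : B ⊆ C) : FE A C := by
  intro F hF
  obtain ⟨k, hk⟩ := h F hF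
  exact ⟨k, fun a ha => hBC (hk a ha)⟩

/-- Iterated intersection with the shift. -/
def feChain (B : Set ℕ) : ℕ → Set ℕ
  | 0 => B
  | j + 1 => feChain B j ∩ ((· + 1) '' feChain B j)

lemma feChain_subset (B : Set ℕ) : ∀ j, feChain B j ⊆ B := by
  intro j
  induction j with
  | zero => exact subset_rfl
  | succ j ih => exact (Set.inter_subset_left).trans ih

lemma feChain_shift (B : Set ℕ) :
    ∀ j, ∀ b ∈ feChain B j, ∀ i ≤ j, ∃ b' ∈ B, b = i + b' := by
  intro j
  induction j with
  | zero =>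
    intro b hb i hi
    interval_cases i
    exact ⟨b, hb, by omega⟩
  | succ j ih =>
    intro b hb i hi
    rcases Nat.eq_zero_or_pos i with rfl | hipos
    · exact ⟨b, feChain_subset B (j + 1) hb, by omega⟩
    · obtain ⟨i', rfl⟩ : ∃ i', i = i' + 1 := ⟨i - 1, by omega⟩
      obtain ⟨b'', hb'', hb''eq⟩ := hb.2
      obtain ⟨b', hb', hb'eq⟩ := ih b'' hb'' i' (by omega)
      have hb2 : b'' + 1 = b := hb''eq
      exact ⟨b', hb', by omega⟩

theorem ufe_no_strictly_between (U V : Ultrafilter ℕ)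
    (h1 : UFE U V) (h2 : UFE V (Ultrafilter.map (· + 1) U)) :
    (UFE V U ∧ UFE U V) ∨
      (UFE V (Ultrafilter.map (· + 1) U) ∧ UFE (Ultrafilter.map (· + 1) U) V) := by
  by_cases hVU : UFE V U
  · exact Or.inl ⟨hVU, h1⟩
  right
  refine ⟨h2, ?_⟩
  rw [UFE] at hVU
  push_neg at hVU
  obtain ⟨B₁, hB₁U, hbad⟩ := hVU
  -- Step 1: if `B ∈ U` and `(1+B) ∉ V`, then some member of `V` finitely embeds into `B`.
  have lemA : ∀ B : Set ℕ, B ∈ U → ((· + 1) '' B) ∉ V → ∃ A ∈ V, FE A B := by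
    intro B hB hnotV
    have himg : ((· + 1) '' B) ∈ Ultrafilter.map (· + 1) U := by
      rw [Ultrafilter.mem_map]
      exact Filter.mem_of_superset hB (Set.subset_preimage_image _ _)
    obtain ⟨A₀, hA₀V, hFE⟩ := h2 _ himg
    refine ⟨A₀ ∩ ((· + 1) '' B)ᶜ, ?_, ?_⟩
    · exact Filter.inter_mem hA₀V (Ultrafilter.compl_mem_iff_notMem.2 hnotV)
    · intro F hF
      rcases F.eq_empty_or_nonempty with rfl | ⟨f₀, hf₀⟩
      · exact ⟨0, by simp⟩
      obtain ⟨k, hk⟩ := hFE F (hF.trans Set.inter_subset_left)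
      match k with
      | 0 =>
        exact absurd (by simpa using hk f₀ hf₀) (hF hf₀).2
      | k' + 1 =>
        refine ⟨k', fun a ha => ?_⟩
        obtain ⟨b, hb, hbeq⟩ := hk a ha
        have hbeq' : b + 1 = k' + 1 + a := hbeq
        have : b = k' + a := by omega
        rwa [← this]
  -- Step 2: every `U`-subset of `B₁`, shifted by one, is in `V`.
  have key : ∀ S : Set ℕ, S ∈ U → S ⊆ B₁ → ((· + 1) '' S) ∈ V := by
    intro S hS hSB
    by_contra hnot
    obtain ⟨A, hAV, hFE⟩ := lemA S hS hnot
    exact hbad A hAV (hFE.mono_right_s11 hSB)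
  -- Step 3: if some `U`-subset of `B₁` has its shift outside `U`, we are done.
  have lemB : ∀ S : Set ℕ, S ∈ U → S ⊆ B₁ → ((· + 1) '' S) ∉ U →
      UFE (Ultrafilter.map (· + 1) U) V := by
    intro S hSU hSB hSnotU
    intro X hX
    have hXS : X ∩ ((· + 1) '' S) ∈ V := Filter.inter_mem hX (key S hSU hSB)
    obtain ⟨A₀, hA₀U, hFE⟩ := h1 _ hXS
    have hA' : A₀ ∩ S ∩ ((· + 1) '' S)ᶜ ∈ U :=
      Filter.inter_mem (Filter.inter_mem hA₀U hSU)
        (Ultrafilter.compl_mem_iff_notMem.2 hSnotU)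
    refine ⟨(· + 1) '' (A₀ ∩ S ∩ ((· + 1) '' S)ᶜ), ?_, ?_⟩
    · rw [Ultrafilter.mem_map]
      exact Filter.mem_of_superset hA' (Set.subset_preimage_image _ _)
    · intro F hF
      rcases F.eq_empty_or_nonempty with rfl | ⟨f₀, hf₀⟩
      · exact ⟨0, by simp⟩
      have hG : (↑(F.image (· - 1)) : Set ℕ) ⊆ A₀ ∩ S ∩ ((· + 1) '' S)ᶜ := by
        intro g hg
        simp only [Finset.coe_image, Set.mem_image, Finset.mem_coe] at hg
        obtain ⟨f, hf, rfl⟩ := hg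
        obtain ⟨a, ha, haeq⟩ := hF hf
        have haeq' : a + 1 = f := haeq
        have : f - 1 = a := by omega
        rwa [this]
      obtain ⟨k, hk⟩ := hFE (F.image (· - 1)) ((hG.trans Set.inter_subset_left).trans Set.inter_subset_left)
      match k with
      | 0 =>
        have hg₀ : f₀ - 1 ∈ F.image (· - 1) := Finset.mem_image_of_mem _ hf₀
        have h1' := (hk _ hg₀).2
        simp only [Nat.zero_add] at h1'
        exact absurd h1' (hG (by exact_mod_cast hg₀)).2
      | k' + 1 =>
        refine ⟨k', fun f hf => ?_⟩
        obtain ⟨a, ha, haeq⟩ := hF hf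
        have haeq' : a + 1 = f := haeq
        have hmem : f - 1 ∈ F.image (· - 1) := Finset.mem_image_of_mem _ hf
        have hx := (hk _ hmem).1
        have : k' + 1 + (f - 1) = k' + f := by omega
        rwa [this] at hx
  -- Main case distinction: is `U` nonprincipal (contains all tails)?
  by_cases hI : ∀ n : ℕ, {x : ℕ | n ≤ x} ∈ U
  · -- Nonprincipal case.
    by_cases hC : ∀ S : Set ℕ, S ∈ U → S ⊆ B₁ → ((· + 1) '' S) ∈ U
    · -- Then `B₁` has long runs everywhere: contradiction with badness.
      exfalso
      have hchainU : ∀ j, feChain B₁ j ∈ U := by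
        intro j
        induction j with
        | zero => exact hB₁U
        | succ j ih =>
          exact Filter.inter_mem ih (hC _ ih (feChain_subset B₁ j))
      refine hbad Set.univ Filter.univ_mem ?_
      intro F _
      rcases F.eq_empty_or_nonempty with rfl | hne
      · exact ⟨0, by simp⟩
      set d := F.max' hne with hd
      have hSU : feChain B₁ d ∩ {x : ℕ | d ≤ x} ∈ U :=
        Filter.inter_mem (hchainU d) (hI d)
      obtain ⟨b, hbchain, hbd⟩ := Ultrafilter.nonempty_of_mem hSU
      refine ⟨b - d, fun f hf => ?_⟩
      have hfd : f ≤ d := F.le_max' f hf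
      obtain ⟨b', hb', hbeq⟩ := feChain_shift B₁ d b hbchain (d - f) (by omega)
      have hdb : d ≤ b := hbd
      have : b - d + f = b' := by omega
      rwa [this]
    · push_neg at hC
      obtain ⟨S, hSU, hSB, hSnotU⟩ := hC
      exact lemB S hSU hSB hSnotU
  · -- Principal case: `U = pure c` for some `c`.
    push_neg at hI
    obtain ⟨n, hn⟩ := hI
    have hfin : ({x : ℕ | n ≤ x}ᶜ : Set ℕ) ∈ U := Ultrafilter.compl_mem_iff_notMem.2 hn
    have hfinite : ({x : ℕ | n ≤ x}ᶜ : Set ℕ).Finite := by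
      have : ({x : ℕ | n ≤ x}ᶜ : Set ℕ) = Set.Iio n := by
        ext x; simp [not_le]
      rw [this]; exact Set.finite_Iio n
    obtain ⟨c, _, hUc⟩ := Ultrafilter.eq_pure_of_finite_mem hfinite hfin
    -- Apply `h2` to the singleton `{c+1}`.
    have hcs : ({c + 1} : Set ℕ) ∈ Ultrafilter.map (· + 1) U := by
      rw [Ultrafilter.mem_map, hUc]
      simp
    obtain ⟨A, hAV, hFEA⟩ := h2 _ hcs
    obtain ⟨a, ha⟩ := Ultrafilter.nonempty_of_mem hAV
    -- `A ⊆ {a}` and `a ≤ c + 1`.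
    have hAa : A ⊆ {a} := by
      intro x hx
      obtain ⟨k, hk⟩ := hFEA {a, x} (by
        intro y hy
        simp only [Finset.coe_insert, Finset.coe_singleton, Set.mem_insert_iff,
          Set.mem_singleton_iff] at hy
        rcases hy with rfl | rfl
        · exact ha
        · exact hx)
      have h₁ : k + a ∈ ({c + 1} : Set ℕ) := hk a (by simp)
      have h₂ : k + x ∈ ({c + 1} : Set ℕ) := hk x (by simp)
      simp only [Set.mem_singleton_iff] at h₁ h₂ ⊢
      omega
    have haV : ({a} : Set ℕ) ∈ V := Filter.mem_of_superset hAV hAa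
    have hac1 : a ≤ c + 1 := by
      obtain ⟨k, hk⟩ := hFEA {a} (by simpa using ha)
      have := hk a (by simp)
      simp only [Set.mem_singleton_iff] at this
      omega
    -- `c ≤ a` from `h1`.
    have hca : c ≤ a := by
      obtain ⟨A', hA'U, hFE'⟩ := h1 _ haV
      have hcA' : c ∈ A' := by rwa [hUc, Ultrafilter.mem_pure] at hA'U
      obtain ⟨k, hk⟩ := hFE' {c} (by simpa using hcA')
      have := hk c (by simp)
      simp only [Set.mem_singleton_iff] at this
      omega
    rcases (by omega : a = c ∨ a = c + 1) with rfl | rfl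
    · -- `V = pure c = U`: contradicts `¬ UFE V U`.
      exfalso
      refine hbad _ haV ?_
      intro F hF
      refine ⟨0, fun f hf => ?_⟩
      have : f = a := hF hf
      subst this
      rwa [Nat.zero_add, ← Ultrafilter.mem_pure, ← hUc]
    · -- `V = pure (c+1) = U ⊕ 1`.
      intro B hB
      have haB : c + 1 ∈ B := by
        obtain ⟨x, hx⟩ := Ultrafilter.nonempty_of_mem (Filter.inter_mem hB haV)
        have : x = c + 1 := hx.2
        rw [← this]; exact hx.1
      refine ⟨{c + 1}, ?_, ?_⟩
      · rw [Ultrafilter.mem_map, hUc]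
        simp
      · intro F hF
        refine ⟨0, fun f hf => ?_⟩
        have : f = c + 1 := hF hf
        rw [Nat.zero_add, this]
        exact haB
end

section
/- There exist nonprincipal ultrafilters U, V on ℕ such that U is not finitely embeddable in V and V is not finitely embeddable in U. In particular, the preorder ≤_fe on ultrafilters on ℕ is not total. -/
lemma key (m n p q : ℕ) (hmn : m < n) (hpq : p < q) :
    4^m + 2*4^q ≠ 4^n + 2*4^p := by
  intro h
  rcases le_or_gt m p with hmp | hpm
  · obtain ⟨n', rfl⟩ := Nat.exists_eq_add_of_lt hmn
    obtain ⟨p', rfl⟩ := Nat.exists_eq_add_of_le hmp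
    obtain ⟨q', rfl⟩ := Nat.exists_eq_add_of_lt hpq
    have h4 : (0:ℕ) < 4^m := pow_pos (by norm_num) m
    have h' : 4^m * (1 + 2*4^(p' + q' + 1)) = 4^m * (4^(n'+1) + 2*4^(p')) := by
      ring_nf at h ⊢; linarith
    have h2 := Nat.eq_of_mul_eq_mul_left h4 h'
    rw [pow_succ, pow_succ] at h2
    generalize 4^(p'+q') = x at h2
    generalize 4^(n') = y at h2
    generalize 4^(p') = z at h2
    omega
  · obtain ⟨m', rfl⟩ := Nat.exists_eq_add_of_lt hpm
    obtain ⟨n', rfl⟩ := Nat.exists_eq_add_of_lt hmn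
    obtain ⟨q', rfl⟩ := Nat.exists_eq_add_of_lt hpq
    have h4 : (0:ℕ) < 4^p := pow_pos (by norm_num) p
    have h' : 4^p * (4^(m'+1) + 2*4^(q'+1)) = 4^p * (4^(m' + 1 + n' + 1) + 2) := by
      ring_nf at h ⊢; linarith
    have h2 := Nat.eq_of_mul_eq_mul_left h4 h'
    rw [pow_succ, pow_succ, show m'+1+n'+1 = (m'+1+n')+1 from rfl, pow_succ] at h2
    generalize 4^(m') = x at h2
    generalize 4^(q') = y at h2
    generalize 4^(m'+1+n') = z at h2
    omega

lemma no_tr (m n p q k : ℕ) (hmn : m < n) (h1 : k + 4^m = 2*4^p)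
    (h2 : k + 4^n = 2*4^q) : False := by
  have hm : (4:ℕ)^m < 4^n := Nat.pow_lt_pow_right (by norm_num) hmn
  have hpq : p < q := by
    have : (4:ℕ)^p < 4^q := by omega
    exact (Nat.pow_lt_pow_iff_right (by norm_num)).mp this
  exact key m n p q hmn hpq (by omega)

lemma no_tr' (m n p q k : ℕ) (hpq : p < q) (h1 : k + 2*4^p = 4^m)
    (h2 : k + 2*4^q = 4^n) : False := by
  have hp : (4:ℕ)^p < 4^q := Nat.pow_lt_pow_right (by norm_num) hpq
  have hmn : m < n := by
    have : (4:ℕ)^m < 4^n := by omega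
    exact (Nat.pow_lt_pow_iff_right (by norm_num)).mp this
  exact key m n p q hmn hpq (by omega)


theorem ufe_not_total :
    ∃ U V : Ultrafilter ℕ, (∀ A ∈ U, A.Infinite) ∧ (∀ B ∈ V, B.Infinite) ∧
      ¬ UFE U V ∧ ¬ UFE V U := by
  set S : Set ℕ := Set.range (fun n => 4^n) with hSdef
  set T : Set ℕ := Set.range (fun n => 2*4^n) with hTdef
  have hSinf : S.Infinite := Set.infinite_range_of_injective fun a b h => by
    have h' : (4:ℕ)^a = 4^b := h
    exact Nat.pow_right_injective (by norm_num) h'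
  have hTinf : T.Infinite := Set.infinite_range_of_injective fun a b h => by
    have h' : 2*(4:ℕ)^a = 2*4^b := h
    have : (4:ℕ)^a = 4^b := by omega
    exact Nat.pow_right_injective (by norm_num) this
  have hU := hSinf.cofinite_inf_principal_neBot
  have hV := hTinf.cofinite_inf_principal_neBot
  set U : Ultrafilter ℕ := Ultrafilter.of (Filter.cofinite ⊓ Filter.principal S)
  set V : Ultrafilter ℕ := Ultrafilter.of (Filter.cofinite ⊓ Filter.principal T)
  have hUle : (↑U : Filter ℕ) ≤ Filter.cofinite ⊓ Filter.principal S := Ultrafilter.of_le _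
  have hVle : (↑V : Filter ℕ) ≤ Filter.cofinite ⊓ Filter.principal T := Ultrafilter.of_le _
  have hSU : S ∈ U := hUle (Filter.mem_inf_of_right (Filter.mem_principal_self S))
  have hTV : T ∈ V := hVle (Filter.mem_inf_of_right (Filter.mem_principal_self T))
  have hUinf : ∀ A ∈ U, A.Infinite := by
    intro A hA
    by_contra hfin
    rw [Set.not_infinite] at hfin
    have hc : Aᶜ ∈ U := hUle (Filter.mem_inf_of_left (by simpa using hfin))
    have := Filter.inter_mem hA hc
    simp at this
  have hVinf : ∀ A ∈ V, A.Infinite := by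
    intro A hA
    by_contra hfin
    rw [Set.not_infinite] at hfin
    have hc : Aᶜ ∈ V := hVle (Filter.mem_inf_of_left (by simpa using hfin))
    have := Filter.inter_mem hA hc
    simp at this
  refine ⟨U, V, hUinf, hVinf, ?_, ?_⟩
  · intro hfe
    obtain ⟨A, hAU, hFE⟩ := hfe T hTV
    have hAS : (A ∩ S).Infinite := hUinf _ (Filter.inter_mem hAU hSU)
    obtain ⟨a, ha, b, hb, hab⟩ := hAS.nontrivial
    obtain ⟨k, hk⟩ := hFE {a, b} (by
      intro x hx
      simp only [Finset.coe_insert, Finset.coe_singleton, Set.mem_insert_iff,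
        Set.mem_singleton_iff] at hx
      rcases hx with rfl | rfl
      exacts [ha.1, hb.1])
    obtain ⟨m, hm⟩ := ha.2
    obtain ⟨n, hn⟩ := hb.2
    have hka : k + a ∈ T := hk a (by simp)
    have hkb : k + b ∈ T := hk b (by simp)
    obtain ⟨p, hp⟩ := hka
    obtain ⟨q, hq⟩ := hkb
    simp only at hm hn hp hq
    have hmn : m ≠ n := by rintro rfl; exact hab (hm.symm.trans hn)
    rcases hmn.lt_or_gt with h | h
    · exact no_tr m n p q k h (by rw [hm, ← hp]) (by rw [hn, ← hq])
    · exact no_tr n m q p k h (by rw [hn, ← hq]) (by rw [hm, ← hp])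
  · intro hfe
    obtain ⟨A, hAV, hFE⟩ := hfe S hSU
    have hAT : (A ∩ T).Infinite := hVinf _ (Filter.inter_mem hAV hTV)
    obtain ⟨a, ha, b, hb, hab⟩ := hAT.nontrivial
    obtain ⟨k, hk⟩ := hFE {a, b} (by
      intro x hx
      simp only [Finset.coe_insert, Finset.coe_singleton, Set.mem_insert_iff,
        Set.mem_singleton_iff] at hx
      rcases hx with rfl | rfl
      exacts [ha.1, hb.1])
    obtain ⟨p, hp⟩ := ha.2
    obtain ⟨q, hq⟩ := hb.2
    have hka : k + a ∈ S := hk a (by simp)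
    have hkb : k + b ∈ S := hk b (by simp)
    obtain ⟨m, hm⟩ := hka
    obtain ⟨n, hn⟩ := hkb
    simp only at hm hn hp hq
    have hpq : p ≠ q := by rintro rfl; exact hab (hp.symm.trans hq)
    rcases hpq.lt_or_gt with h | h
    · exact no_tr' m n p q k h (by rw [hp, hm]) (by rw [hq, hn])
    · exact no_tr' n m q p k h (by rw [hq, hn]) (by rw [hp, hm])
end

section
/- For every infinite set X ⊆ ℕ, there is no minimum among nonprincipal ultrafilters containing X: there is no nonprincipal ultrafilter U on ℕ with X ∈ U such that U ≤_fe V for every nonprincipal ultrafilter V on ℕ with X ∈ V. -/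
/-- Every infinite set of naturals has elements above any bound. -/
lemma infinite_exists_gt {S : Set ℕ} (hS : S.Infinite) (m : ℕ) : ∃ x ∈ S, m < x := by
  by_contra h
  push_neg at h
  exact hS ((Set.finite_Iic m).subset fun x hx => h x hx)

/-- For a doubling sequence, a difference `y j - y i` (with `i < j`) determines `j`. -/
lemma key_aux (y : ℕ → ℕ) (hy : ∀ n, 2 * y n < y (n + 1)) (hm : StrictMono y)
    {i j i' j' : ℕ} (hij : i < j) (hij' : i' < j')
    (hd : y j - y i = y j' - y i') (h : j < j') : False := by
  have h1 : y j ≤ y (j' - 1) := hm.le_iff_le.mpr (by omega)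
  have h2 : y i' ≤ y (j' - 1) := hm.le_iff_le.mpr (by omega)
  have h3 : 2 * y (j' - 1) < y j' := by
    have := hy (j' - 1)
    have heq : j' - 1 + 1 = j' := by omega
    rwa [heq] at this
  have h4 : y i < y j := hm hij
  have h5 : y i' < y j' := hm hij'
  omega

lemma key_diff (y : ℕ → ℕ) (hy : ∀ n, 2 * y n < y (n + 1)) (hm : StrictMono y)
    {i j i' j' : ℕ} (hij : i < j) (hij' : i' < j')
    (hd : y j - y i = y j' - y i') : j = j' := by
  rcases lt_trichotomy j j' with h | h | h
  · exact absurd (key_aux y hy hm hij hij' hd h) not_false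
  · exact h
  · exact absurd (key_aux y hy hm hij' hij hd.symm h) not_false

theorem no_minimum_nonprincipal_ultrafilter (X : Set ℕ) (hX : X.Infinite) :
    ¬ ∃ U : Ultrafilter ℕ, X ∈ U ∧ (∀ A ∈ U, A.Infinite) ∧
      ∀ V : Ultrafilter ℕ, X ∈ V → (∀ B ∈ V, B.Infinite) → UFE U V := by
  rintro ⟨U, hXU, hUinf, hmin⟩
  -- choose a doubling sequence inside X
  choose g hgX hgGt using fun m => infinite_exists_gt hX m
  set y : ℕ → ℕ := fun n => Nat.rec (g 0) (fun _ prev => g (2 * prev)) n with hydef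
  have hyX : ∀ n, y n ∈ X := by
    intro n
    cases n with
    | zero => exact hgX 0
    | succ n => exact hgX _
  have hygrow : ∀ n, 2 * y n < y (n + 1) := fun n => hgGt (2 * y n)
  have hmono : StrictMono y := strictMono_nat_of_lt_succ fun n => by
    have := hygrow n; omega
  -- the two interleaved sparse sets
  set Zs : Set ℕ := Set.range (fun m => y (2 * m + 1)) with hZdef
  set Ys : Set ℕ := Set.range (fun m => y (2 * m)) with hYdef
  have hZX : Zs ⊆ X := by rintro _ ⟨m, rfl⟩; exact hyX (2 * m + 1)
  have hYX : Ys ⊆ X := by rintro _ ⟨m, rfl⟩; exact hyX (2 * m)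
  have hZinf : Zs.Infinite :=
    Set.infinite_range_of_injective fun a b h => by
      have : (2 * a + 1 : ℕ) = 2 * b + 1 := hmono.injective h
      omega
  have hYinf : Ys.Infinite :=
    Set.infinite_range_of_injective fun a b h => by
      have : (2 * a : ℕ) = 2 * b := hmono.injective h
      omega
  -- for any infinite subset S of X, some member of U is finitely embeddable in S
  have build : ∀ S : Set ℕ, S.Infinite → S ⊆ X → ∃ A ∈ U, FE A S := by
    intro S hSinf hSX
    have hne : (Filter.cofinite ⊓ Filter.principal S).NeBot :=
      hSinf.cofinite_inf_principal_neBot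
    set V := Ultrafilter.of (Filter.cofinite ⊓ Filter.principal S) with hV
    have hVle : (V : Filter ℕ) ≤ Filter.cofinite ⊓ Filter.principal S :=
      Ultrafilter.of_le _
    have hSV : S ∈ V := hVle (Filter.mem_inf_of_right (Filter.mem_principal_self S))
    have hXV : X ∈ V := Filter.mem_of_superset hSV hSX
    have hVinf : ∀ B ∈ V, B.Infinite := by
      intro B hB
      by_contra hfin
      rw [Set.not_infinite] at hfin
      have hBc : Bᶜ ∈ V := (hVle.trans inf_le_left) hfin.compl_mem_cofinite
      have : (∅ : Set ℕ) ∈ V := by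
        have := Filter.inter_mem hB hBc
        rwa [Set.inter_compl_self] at this
      exact Filter.empty_notMem (V : Filter ℕ) this
    exact hmin V hXV hVinf S hSV
  obtain ⟨A, hAU, hAZ⟩ := build Zs hZinf hZX
  obtain ⟨A', hA'U, hA'Y⟩ := build Ys hYinf hYX
  have hAA' : A ∩ A' ∈ U := Filter.inter_mem hAU hA'U
  have hinf := hUinf _ hAA'
  obtain ⟨a, ha⟩ := hinf.nonempty
  obtain ⟨b, hb, hab⟩ := infinite_exists_gt hinf a
  have hsub : (↑({a, b} : Finset ℕ) : Set ℕ) ⊆ A ∩ A' := by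
    intro x hx
    simp only [Finset.coe_insert, Finset.coe_singleton, Set.mem_insert_iff,
      Set.mem_singleton_iff] at hx
    rcases hx with rfl | rfl
    · exact ha
    · exact hb
  obtain ⟨k, hk⟩ := hAZ {a, b} (hsub.trans Set.inter_subset_left)
  obtain ⟨k', hk'⟩ := hA'Y {a, b} (hsub.trans Set.inter_subset_right)
  obtain ⟨m, hm⟩ := hk a (by simp)
  obtain ⟨m', hm'⟩ := hk b (by simp)
  obtain ⟨n, hn⟩ := hk' a (by simp)
  obtain ⟨n', hn'⟩ := hk' b (by simp)
  have hm2 : y (2 * m + 1) = k + a := hm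
  have hm'2 : y (2 * m' + 1) = k + b := hm'
  have hn2 : y (2 * n) = k' + a := hn
  have hn'2 : y (2 * n') = k' + b := hn'
  clear hm hm' hn hn'
  -- y (2m+1) = k + a, y (2m'+1) = k + b, y (2n) = k' + a, y (2n') = k' + b
  have h1 : 2 * m + 1 < 2 * m' + 1 := by
    have : y (2 * m + 1) < y (2 * m' + 1) := by omega
    exact hmono.lt_iff_lt.mp this
  have h2 : 2 * n < 2 * n' := by
    have : y (2 * n) < y (2 * n') := by omega
    exact hmono.lt_iff_lt.mp this
  have hd : y (2 * m' + 1) - y (2 * m + 1) = y (2 * n') - y (2 * n) := by omega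
  have := key_diff y hygrow hmono h1 h2 hd
  omega
end

section
/- Every ≤_fe-chain of ultrafilters on ℕ has a ≤_fe-upper bound: if (I, ≤) is a linearly ordered set and (U_i)_{i∈I} is a family of ultrafilters on ℕ such that U_i ≤_fe U_j whenever i ≤ j, then there exists an ultrafilter U on ℕ with U_i ≤_fe U for every i ∈ I. Moreover, if W is an ultrafilter on I containing every up-set {j ∈ I : j ≥ i}, then the limit ultrafilter U = W-lim_{i∈I} U_i = {A ⊆ ℕ : {i ∈ I : A ∈ U_i} ∈ W} is such an upper bound. -/
theorem ufe_chain_upper_bound {I : Type*} [LinearOrder I]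
    (U : I → Ultrafilter ℕ) (hchain : ∀ i j : I, i ≤ j → UFE (U i) (U j))
    (W : Ultrafilter I) (hW : ∀ i : I, {j : I | i ≤ j} ∈ W) :
    (∃ V : Ultrafilter ℕ, ∀ i : I, UFE (U i) V) ∧
      ∀ i : I, UFE (U i) (W.bind U) := by
  have key : ∀ i : I, UFE (U i) (W.bind U) := by
    intro i B hB
    have hS : {j : I | B ∈ U j} ∈ W := hB
    have hmem : ({j : I | B ∈ U j} ∩ {j : I | i ≤ j}).Nonempty := by
      rcases W.nonempty_of_mem (W.inter_mem hS (hW i)) with ⟨j, hj⟩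
      exact ⟨j, hj⟩
    rcases hmem with ⟨j, hjB, hij⟩
    exact hchain i j hij B hjB
  exact ⟨⟨W.bind U, key⟩, key⟩
end

section
/- There exists a maximal ultrafilter for finite embeddability, i.e., an ultrafilter U on ℕ such that V ≤_fe U for every ultrafilter V on ℕ. -/
lemma pws_mono {A B : Set ℕ} (h : A ⊆ B) (hA : PWSyndetic A) : PWSyndetic B := by
  obtain ⟨n, hn⟩ := hA
  refine ⟨n, fun L => ?_⟩
  obtain ⟨k, hk⟩ := hn L
  refine ⟨k, fun i hi => ?_⟩
  obtain ⟨j, hj, a, ha, he⟩ := hk i hi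
  exact ⟨j, hj, a, h ha, he⟩

lemma not_pws_empty : ¬ PWSyndetic (∅ : Set ℕ) := by
  rintro ⟨n, hn⟩
  obtain ⟨k, hk⟩ := hn 0
  obtain ⟨j, _, a, ha, _⟩ := hk 0 le_rfl
  exact ha

lemma pws_univ : PWSyndetic (Set.univ : Set ℕ) := by
  refine ⟨0, fun L => ⟨0, fun i hi => ?_⟩⟩
  exact ⟨0, le_rfl, 0 + i, trivial, rfl⟩

/-- Brown's lemma: piecewise syndetic sets are partition regular. -/
lemma brown {A B : Set ℕ} (hAB : PWSyndetic (A ∪ B)) (hB : ¬ PWSyndetic B) :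
    PWSyndetic A := by
  obtain ⟨p, hp⟩ := hAB
  rw [PWSyndetic] at hB
  push_neg at hB
  have hnb := hB p
  rw [Thick] at hnb
  push_neg at hnb
  obtain ⟨l, hl⟩ := hnb
  refine ⟨p + l, fun L => ?_⟩
  obtain ⟨k, hk⟩ := hp (L + l)
  refine ⟨k + l, fun j hj => ?_⟩
  obtain ⟨t, ht, hz⟩ := hl (k + j)
  have hzT : ∃ i ≤ p, ∃ a ∈ A ∪ B, k + j + t = a + i := by
    have := hk (j + t) (by omega)
    simpa [add_assoc] using this
  obtain ⟨i, hi, a, ha, hEq⟩ := hzT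
  have haA : a ∈ A := by
    rcases ha with h | h
    · exact h
    · exact absurd ⟨i, hi, a, h, hEq⟩ hz
  exact ⟨i + (l - t), by omega, a, haA, by omega⟩

/-- The filter of sets whose complement is not piecewise syndetic. -/
def pwsFilter : Filter ℕ where
  sets := {A | ¬ PWSyndetic Aᶜ}
  univ_sets := by
    simpa using not_pws_empty
  sets_of_superset := by
    intro s t hs hst hpt
    exact hs (pws_mono (Set.compl_subset_compl.mpr hst) hpt)
  inter_sets := by
    intro s t hs ht h
    rw [Set.compl_inter] at h
    exact hs (brown h ht)

lemma exists_pws_ultrafilter : ∃ U : Ultrafilter ℕ, ∀ B ∈ U, PWSyndetic B := by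
  have hne : pwsFilter.NeBot := by
    refine Filter.neBot_iff.mpr (fun h => ?_)
    have hmem : (∅ : Set ℕ) ∈ pwsFilter := Filter.empty_mem_iff_bot.mpr h
    have : ¬ PWSyndetic ((∅ : Set ℕ)ᶜ) := hmem
    rw [Set.compl_empty] at this
    exact this pws_univ
  refine ⟨Ultrafilter.of pwsFilter, fun B hB => ?_⟩
  by_contra hpws
  have hBc : Bᶜ ∈ pwsFilter := by
    show ¬ PWSyndetic (Bᶜᶜ)
    rwa [compl_compl]
  have hBcU : Bᶜ ∈ Ultrafilter.of pwsFilter := Ultrafilter.of_le pwsFilter hBc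
  exact (Ultrafilter.compl_mem_iff_notMem.mp hBcU) hB

lemma pws_fe {B : Set ℕ} (hB : PWSyndetic B) (V : Ultrafilter ℕ) :
    ∃ A ∈ V, FE A B := by
  obtain ⟨n, hT⟩ := hB
  choose k hk using hT
  have H : ∀ L a, a + n ≤ L → ∃ i b, i ≤ n ∧ b ∈ B ∧ k L + n + a = b + i := by
    intro L a h
    obtain ⟨i, hi, b, hb, he⟩ := hk L (n + a) (by omega)
    exact ⟨i, b, hi, hb, by omega⟩
  choose! c bf hc hbf heq using H
  set W : Ultrafilter ℕ := Ultrafilter.of (Filter.atTop : Filter ℕ) with hWdef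
  have hWle : (W : Filter ℕ) ≤ (Filter.atTop : Filter ℕ) := Ultrafilter.of_le _
  have hG : ∀ a, ∃ i, i ≤ n ∧ {L | a + n ≤ L ∧ c L a = i} ∈ W := by
    intro a
    have h1 : {L | a + n ≤ L} ∈ W := hWle (Filter.mem_atTop (a + n))
    have h2 : {L | a + n ≤ L} ⊆ ⋃ i ∈ Set.Iic n, {L | a + n ≤ L ∧ c L a = i} := by
      intro L hL
      simp only [Set.mem_iUnion, Set.mem_Iic]
      exact ⟨c L a, hc L a hL, hL, rfl⟩
    have h3 := (Ultrafilter.finite_biUnion_mem_iff (Set.finite_Iic n)).mp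
      (Filter.mem_of_superset h1 h2)
    obtain ⟨i, hi, hmem⟩ := h3
    exact ⟨i, hi, hmem⟩
  choose g hgn hgW using hG
  have hV : ∃ i, i ≤ n ∧ {a | g a = i} ∈ V := by
    have h1 : (Set.univ : Set ℕ) ⊆ ⋃ i ∈ Set.Iic n, {a | g a = i} := by
      intro a _
      simp only [Set.mem_iUnion, Set.mem_Iic]
      exact ⟨g a, hgn a, rfl⟩
    have h3 := (Ultrafilter.finite_biUnion_mem_iff (f := V) (Set.finite_Iic n)).mp
      (Filter.mem_of_superset (Filter.univ_mem (f := (V : Filter ℕ))) h1)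
    obtain ⟨i, hi, hmem⟩ := h3
    exact ⟨i, hi, hmem⟩
  obtain ⟨i, hin, hA⟩ := hV
  refine ⟨{a | g a = i}, hA, ?_⟩
  intro F hF
  have hS : (⋂ a ∈ (F : Set ℕ), {L | a + n ≤ L ∧ c L a = g a}) ∈ W :=
    (Filter.biInter_mem F.finite_toSet).mpr (fun a _ => hgW a)
  obtain ⟨L, hL⟩ := Filter.nonempty_of_mem hS
  refine ⟨k L + (n - i), fun a haF => ?_⟩
  have ha : g a = i := hF (Finset.mem_coe.mpr haF)
  have h1 : a + n ≤ L ∧ c L a = g a :=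
    Set.mem_iInter₂.mp hL a (Finset.mem_coe.mpr haF)
  obtain ⟨hle, hca⟩ := h1
  have hb := hbf L a hle
  have he := heq L a hle
  rw [hca, ha] at he
  have hkey : k L + (n - i) + a = bf L a := by omega
  rw [hkey]
  exact hb

theorem exists_maximal_ultrafilter :
    ∃ U : Ultrafilter ℕ, ∀ V : Ultrafilter ℕ, UFE V U := by
  obtain ⟨U, hU⟩ := exists_pws_ultrafilter
  exact ⟨U, fun V B hB => pws_fe (hU B hB) V⟩
end

section
/- An ultrafilter U on ℕ is maximal for finite embeddability (i.e., V ≤_fe U for every ultrafilter V on ℕ) if and only if every set A ∈ U is piecewise syndetic. -/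
open Filter

/-- FE transfers piecewise syndeticity. -/
lemma fe_pws {A B : Set ℕ} (hfe : FE A B) (h : PWSyndetic A) : PWSyndetic B := by
  classical
  obtain ⟨n, hT⟩ := h
  refine ⟨n, fun L => ?_⟩
  obtain ⟨k, hk⟩ := hT L
  have hsel : ∀ i, i ≤ L → ∃ a, a ∈ A ∧ ∃ j ≤ n, k + i = a + j := by
    intro i hi
    obtain ⟨j, hj, a, ha, he⟩ := hk i hi
    exact ⟨a, ha, j, hj, he⟩
  set f : ℕ → ℕ := fun i => if h : i ≤ L then (hsel i h).choose else 0 with hfdef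
  have hfA : ∀ i, i ≤ L → f i ∈ A ∧ ∃ j ≤ n, k + i = f i + j := by
    intro i hi
    simp only [hfdef, dif_pos hi]
    exact ⟨(hsel i hi).choose_spec.1, (hsel i hi).choose_spec.2⟩
  obtain ⟨t, ht⟩ := hfe ((Finset.range (L + 1)).image f) (by
    intro a ha
    simp only [Finset.coe_image, Set.mem_image, Finset.mem_coe, Finset.mem_range] at ha
    obtain ⟨i, hi, rfl⟩ := ha
    exact (hfA i (by omega)).1)
  refine ⟨t + k, fun i hi => ?_⟩
  obtain ⟨-, j, hj, he⟩ := hfA i hi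
  refine ⟨j, hj, t + f i, ht _ ?_, by omega⟩
  exact Finset.mem_image_of_mem f (Finset.mem_range.mpr (by omega))

/-- If a thick set is split in two, the first part is piecewise syndetic
or the second part is thick. -/
lemma thick_union {T X Y : Set ℕ} (hT : Thick T) (hs : T ⊆ X ∪ Y) :
    PWSyndetic X ∨ Thick Y := by
  by_cases hX : PWSyndetic X
  · exact Or.inl hX
  right
  intro n
  unfold PWSyndetic at hX
  push_neg at hX
  have h1 := hX n
  unfold Thick at h1
  push_neg at h1
  obtain ⟨L, hL⟩ := h1
  obtain ⟨k, hk⟩ := hT (L + n + n)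
  obtain ⟨i, hiL, hi⟩ := hL (k + n)
  refine ⟨k + i, fun d hd => ?_⟩
  have hmemT : k + i + d ∈ T := by
    have := hk (i + d) (by omega)
    rwa [← Nat.add_assoc] at this
  rcases hs hmemT with hX' | hY'
  · exfalso
    exact hi ⟨n - d, by omega, k + i + d, hX', by omega⟩
  · exact hY'

/-- A thick set covered by finitely many sets has a piecewise syndetic part. -/
lemma cover_pws {ι : Type*} [DecidableEq ι] {s : Finset ι} {f : ι → Set ℕ} {T : Set ℕ}
    (hT : Thick T) (hsub : T ⊆ ⋃ i ∈ s, f i) : ∃ i ∈ s, PWSyndetic (f i) := by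
  classical
  induction s using Finset.induction_on generalizing T with
  | empty =>
    obtain ⟨k, hk⟩ := hT 0
    have := hsub (hk 0 le_rfl)
    simp at this
  | @insert a s ha ih =>
    rw [Finset.set_biUnion_insert] at hsub
    rcases thick_union hT hsub with h | h
    · exact ⟨a, Finset.mem_insert_self a s, h⟩
    · obtain ⟨i, hi, hpi⟩ := ih h (subset_refl _)
      exact ⟨i, Finset.mem_insert_of_mem hi, hpi⟩

/-- If `B` is piecewise syndetic then `ℕ` is a finite union of sets each
finitely embeddable in `B`. -/
lemma pws_cover {B : Set ℕ} (h : PWSyndetic B) :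
    ∃ n : ℕ, ∃ A : ℕ → Set ℕ, (∀ j, FE (A j) B) ∧ (⋃ j ∈ Set.Iic n, A j) = Set.univ := by
  classical
  obtain ⟨n, hT⟩ := h
  have hk : ∀ m : ℕ, ∃ k, ∀ i ≤ m + n, k + i ∈ {m : ℕ | ∃ i ≤ n, ∃ a ∈ B, m = a + i} :=
    fun m => hT (m + n)
  set k : ℕ → ℕ := fun m => (hk m).choose with hkdef
  have hkspec : ∀ m, ∀ i ≤ m + n, k m + i ∈ {m : ℕ | ∃ i ≤ n, ∃ a ∈ B, m = a + i} :=
    fun m => (hk m).choose_spec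
  have hsel : ∀ m x, x ≤ m → ∃ i, i ≤ n ∧ (k m + (n - i)) + x ∈ B := by
    intro m x hx
    obtain ⟨i, hi, a, ha, he⟩ := hkspec m (x + n) (by omega)
    refine ⟨i, hi, ?_⟩
    have hax : (k m + (n - i)) + x = a := by omega
    rw [hax]; exact ha
  set g : ℕ → ℕ → ℕ := fun m x => if h : x ≤ m then (hsel m x h).choose else 0 with hgdef
  have hg_le : ∀ m x, g m x ≤ n := by
    intro m x
    simp only [hgdef]
    split
    · exact (hsel m x ‹_›).choose_spec.1
    · exact Nat.zero_le n
  have hg_mem : ∀ m x, x ≤ m → (k m + (n - g m x)) + x ∈ B := by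
    intro m x hx
    simp only [hgdef, dif_pos hx]
    exact (hsel m x hx).choose_spec.2
  set W := Filter.hyperfilter ℕ with hWdef
  have hc : ∀ x, ∃ j, j ≤ n ∧ {m | g m x = j} ∈ W := by
    intro x
    have huniv : (⋃ j ∈ Set.Iic n, {m | g m x = j}) ∈ W := by
      have : (⋃ j ∈ Set.Iic n, {m | g m x = j}) = Set.univ := by
        ext m
        simp only [Set.mem_iUnion, Set.mem_Iic, Set.mem_setOf_eq, Set.mem_univ, iff_true]
        exact ⟨g m x, hg_le m x, rfl⟩
      rw [this]; exact Filter.univ_mem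
    obtain ⟨j, hj, hjm⟩ := (Ultrafilter.finite_biUnion_mem_iff (Set.finite_Iic n)).mp huniv
    exact ⟨j, hj, hjm⟩
  set c : ℕ → ℕ := fun x => (hc x).choose with hcdef
  have hc_le : ∀ x, c x ≤ n := fun x => (hc x).choose_spec.1
  have hc_mem : ∀ x, {m | g m x = c x} ∈ W := fun x => (hc x).choose_spec.2
  refine ⟨n, fun j => {x | c x = j}, ?_, ?_⟩
  · intro j F hF
    have hev : ∀ᶠ m in (W : Filter ℕ), ∀ x ∈ F, g m x = j := by
      rw [Finset.eventually_all]
      intro x hx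
      have hx' := hc_mem x
      have hcx : c x = j := hF hx
      rw [hcx] at hx'
      exact hx'
    have hbig : ∀ᶠ m in (W : Filter ℕ), F.sup id ≤ m :=
      (Filter.eventually_ge_atTop (F.sup id)).filter_mono Nat.hyperfilter_le_atTop
    obtain ⟨m, hm1, hm2⟩ := (hev.and hbig).exists
    refine ⟨k m + (n - j), fun a ha => ?_⟩
    have hxm : a ≤ m := le_trans (Finset.le_sup (f := id) ha) hm2
    have hmem := hg_mem m a hxm
    rw [hm1 a ha] at hmem
    exact hmem
  · ext x
    simp only [Set.mem_iUnion, Set.mem_Iic, Set.mem_setOf_eq, Set.mem_univ, iff_true]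
    exact ⟨c x, hc_le x, rfl⟩

theorem maximal_iff_all_pwSyndetic (U : Ultrafilter ℕ) :
    (∀ V : Ultrafilter ℕ, UFE V U) ↔ ∀ A ∈ U, PWSyndetic A := by
  classical
  constructor
  · intro hmax A hA
    by_contra hnpws
    set 𝒞 : Set (Set ℕ) := {s | FE sᶜ A} with h𝒞
    have hne : (Filter.generate 𝒞).NeBot := by
      rw [Filter.generate_neBot_iff]
      intro t hts htf
      by_contra hemp
      have hempty : ⋂₀ t = ∅ := Set.not_nonempty_iff_eq_empty.mp hemp
      have hcov : Set.univ ⊆ ⋃ s ∈ htf.toFinset, sᶜ := by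
        intro x _
        have hx : x ∉ ⋂₀ t := by rw [hempty]; exact fun h => h
        rw [Set.mem_sInter] at hx
        push_neg at hx
        obtain ⟨s, hs, hxs⟩ := hx
        exact Set.mem_biUnion (htf.mem_toFinset.mpr hs) hxs
      have hthick : Thick Set.univ := fun n => ⟨0, fun i _ => trivial⟩
      obtain ⟨s₀, hs₀, hps₀⟩ := cover_pws hthick hcov
      have hfe : FE s₀ᶜ A := hts (htf.mem_toFinset.mp hs₀)
      exact hnpws (fe_pws hfe hps₀)
    haveI := hne
    obtain ⟨V, hV⟩ := @Ultrafilter.exists_le ℕ (Filter.generate 𝒞) hne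
    obtain ⟨X, hXV, hXfe⟩ := hmax V A hA
    have hXc : Xᶜ ∈ V := by
      refine hV (Filter.mem_generate_of_mem ?_)
      show FE Xᶜᶜ A
      rwa [compl_compl]
    have : X ∩ Xᶜ ∈ V := V.toFilter.inter_mem hXV hXc
    rw [Set.inter_compl_self] at this
    exact Filter.empty_notMem V.toFilter this
  · intro hPWS V B hB
    obtain ⟨n, A, hFE, hcover⟩ := pws_cover (hPWS B hB)
    have hmem : (⋃ j ∈ Set.Iic n, A j) ∈ V := by
      rw [hcover]; exact Filter.univ_mem
    obtain ⟨j, -, hj⟩ := (Ultrafilter.finite_biUnion_mem_iff (Set.finite_Iic n)).mp hmem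
    exact ⟨A j, hj, hFE j⟩
end

section
/- Let P be a property of subsets of ℕ that is partition regular and ≤_fe-upward invariant. Then for every ultrafilter U on ℕ that is maximal for finite embeddability (i.e., V ≤_fe U for every ultrafilter V on ℕ) and for every A ∈ U, P(A) holds. -/
theorem maximal_ultrafilter_property (P : Set ℕ → Prop)
    (hpr : ∃ W : Ultrafilter ℕ, ∀ A ∈ W, P A)
    (hup : ∀ A B : Set ℕ, P A → FE A B → P B)
    (U : Ultrafilter ℕ) (hU : ∀ V : Ultrafilter ℕ, UFE V U) :
    ∀ A ∈ U, P A := by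
  intro A hA
  obtain ⟨W, hW⟩ := hpr
  obtain ⟨B, hB, hFE⟩ := hU W A hA
  exact hup B A (hW B hB) hFE
end

section
/- Every piecewise syndetic subset of ℕ contains arbitrarily long arithmetic progressions and has positive upper Banach density. -/
open Filter Pointwise

theorem Thick.exists_mono_ap {κ : Type*} [Finite κ] {T : Set ℕ} (hT : Thick T) (c : ℕ → κ)
    (k : ℕ) : ∃ a, ∃ d ≥ 1, ∃ j : κ, ∀ i < k, a + i * d ∈ T ∧ c (a + i * d) = j := by
  choose K hK using hT
  let U : Ultrafilter ℕ := Ultrafilter.of atTop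
  have hlim : ∀ m, ∃ j, ∀ᶠ N in (U : Filter ℕ), c (K N + m) = j := fun m => by
    obtain ⟨j, hj⟩ := (U.map fun N => c (K N + m)).eq_pure_of_finite
    have hmem : ({j} : Set κ) ∈ U.map fun N => c (K N + m) := by rw [hj]; exact rfl
    exact ⟨j, hmem⟩
  choose limColour hlimColour using hlim
  obtain ⟨d, hd, b, j, hmono⟩ :=
    Combinatorics.exists_mono_homothetic_copy (Finset.range k) limColour
  have hgood : ∀ᶠ N in (U : Filter ℕ), ∀ i ∈ Finset.range k, c (K N + (d * i + b)) = j := by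
    refine (Finset.range k).eventually_all.2 fun i hi => ?_
    rw [← smul_eq_mul, ← hmono i hi]
    exact hlimColour _
  have hlarge : ∀ᶠ N in (U : Filter ℕ), d * k + b ≤ N :=
    Ultrafilter.of_le atTop (eventually_ge_atTop _)
  obtain ⟨N, hN, hNlarge⟩ := (hgood.and hlarge).exists
  refine ⟨K N + b, d, hd, j, fun i hi => ?_⟩
  have hshift : K N + b + i * d = K N + (d * i + b) := by ring
  have hdi : d * i ≤ d * k := Nat.mul_le_mul_left d hi.le
  rw [hshift]
  exact ⟨hK N _ (by omega), hN i (Finset.mem_range.2 hi)⟩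

theorem Thick.exists_ap_of_subset_iUnion {ι : Type*} [Finite ι] {T : Set ℕ} (hT : Thick T)
    {C : ι → Set ℕ} (hTC : T ⊆ ⋃ i, C i) (k : ℕ) :
    ∃ i a, ∃ d ≥ 1, ∀ j < k, a + j * d ∈ C i := by
  have hcover : ∀ m ∈ T, ∃ i, m ∈ C i := fun m hm => Set.mem_iUnion.1 (hTC hm)
  obtain ⟨K, hK⟩ := hT 0
  have : Nonempty ι := ⟨(hcover _ (hK 0 le_rfl)).choose⟩
  choose! colour hcolour using hcover
  obtain ⟨a, d, hd, i, hap⟩ := hT.exists_mono_ap colour k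
  exact ⟨i, a, d, hd, fun j hj => (hap j hj).2 ▸ hcolour _ (hap j hj).1⟩

theorem PWSyndetic.hasAPs {A : Set ℕ} (hA : PWSyndetic A) : HasAPs A := by
  obtain ⟨n, hT⟩ := hA
  intro k
  rcases Nat.eq_zero_or_pos k with rfl | hk
  · exact ⟨0, 1, le_rfl, fun i hi => absurd hi (Nat.not_lt_zero i)⟩
  have hTC : {m : ℕ | ∃ i ≤ n, ∃ a ∈ A, m = a + i} ⊆
      ⋃ i : Fin (n + 1), {m | ∃ a ∈ A, m = a + i} := by
    rintro m ⟨i, hi, a, ha, rfl⟩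
    exact Set.mem_iUnion.2 ⟨⟨i, Nat.lt_succ_of_le hi⟩, a, ha, rfl⟩
  obtain ⟨i, a, d, hd, hap⟩ := hT.exists_ap_of_subset_iUnion hTC k
  obtain ⟨a₀, -, ha₀⟩ := hap 0 hk
  refine ⟨a - i, d, hd, fun j hj => ?_⟩
  obtain ⟨x, hx, hxj⟩ := hap j hj
  have hshift : a - i + j * d = x := by simp only [zero_mul, add_zero] at ha₀; omega
  exact hshift ▸ hx

theorem ncard_inter_Icc_le (A : Set ℕ) (k M : ℕ) : (A ∩ Set.Icc (k + 1) (k + M)).ncard ≤ M :=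
  calc (A ∩ Set.Icc (k + 1) (k + M)).ncard
      ≤ (Set.Icc (k + 1) (k + M)).ncard := Set.ncard_le_ncard Set.inter_subset_right
        (Set.finite_Icc _ _)
    _ = M := by rw [Set.ncard_eq_toFinset_card', Set.toFinset_Icc, Nat.card_Icc]; omega

theorem le_BD_of_eventually_exists {A : Set ℕ} {c : ℝ}
    (h : ∀ᶠ M in atTop, ∃ k, c * M ≤ (A ∩ Set.Icc (k + 1) (k + M)).ncard) : c ≤ BD A := by
  have hcount_le (M k : ℕ) : ((A ∩ Set.Icc (k + 1) (k + M)).ncard : ℝ) ≤ M := by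
    exact_mod_cast ncard_inter_Icc_le A k M
  have hbdd (M : ℕ) : BddAbove (Set.range fun k => ((A ∩ Set.Icc (k + 1) (k + M)).ncard : ℝ)) :=
    ⟨M, Set.forall_mem_range.2 (hcount_le M)⟩
  refine le_limsup_of_frequently_le ?_ (isBoundedUnder_of ⟨1, fun M => ?_⟩)
  · refine (h.and (eventually_gt_atTop 0)).frequently.mono fun M ⟨⟨k, hk⟩, hM⟩ => ?_
    rw [le_div_iff₀ (by exact_mod_cast hM)]
    exact hk.trans (le_ciSup (hbdd M) k)
  · exact div_le_one_of_le₀ (ciSup_le (hcount_le M)) M.cast_nonneg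

theorem Thick.exists_le_ncard_inter_Icc_mul {A : Set ℕ} {n : ℕ}
    (hT : Thick {m : ℕ | ∃ i ≤ n, ∃ a ∈ A, m = a + i}) (N : ℕ) :
    ∃ k, N ≤ (A ∩ Set.Icc (k + 1) (k + (N + n))).ncard * (n + 1) := by
  classical
  obtain ⟨k, hk⟩ := hT (N + n)
  set F := (Finset.Icc (k + 1) (k + (N + n))).filter (· ∈ A)
  have hF : A ∩ Set.Icc (k + 1) (k + (N + n)) = ↑F := by
    ext x
    simp [F, and_comm]
  have hcover : Finset.Icc (k + n + 1) (k + n + N) ⊆ F + Finset.range (n + 1) := by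
    intro m hm
    rw [Finset.mem_Icc] at hm
    obtain ⟨i, hi, a, ha, hm'⟩ := hk (m - k) (by omega)
    exact Finset.mem_add.2
      ⟨a, Finset.mem_filter.2 ⟨Finset.mem_Icc.2 (by omega), ha⟩, i, Finset.mem_range.2 (by omega),
        by omega⟩
  refine ⟨k, ?_⟩
  calc N = (Finset.Icc (k + n + 1) (k + n + N)).card := by simp
    _ ≤ (F + Finset.range (n + 1)).card := Finset.card_le_card hcover
    _ ≤ F.card * (n + 1) := by
      simpa using Finset.card_add_le (s := F) (t := Finset.range (n + 1))
    _ = _ := by rw [hF, Set.ncard_coe_finset]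

theorem PWSyndetic.BD_pos {A : Set ℕ} (hA : PWSyndetic A) : 0 < BD A := by
  obtain ⟨n, hT⟩ := hA
  refine lt_of_lt_of_le (by positivity : (0 : ℝ) < 1 / (2 * (n + 1)))
    (le_BD_of_eventually_exists ?_)
  filter_upwards [eventually_ge_atTop (2 * n)] with M hM
  obtain ⟨k, hk⟩ := hT.exists_le_ncard_inter_Icc_mul (M - n)
  rw [Nat.sub_add_cancel (by omega)] at hk
  refine ⟨k, ?_⟩
  have hMn : (M : ℝ) ≤ 2 * ((M - n : ℕ) : ℝ) := by exact_mod_cast (by omega : M ≤ 2 * (M - n))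
  have hk' : ((M - n : ℕ) : ℝ) ≤ (A ∩ Set.Icc (k + 1) (k + M)).ncard * (n + 1) := by
    exact_mod_cast hk
  rw [div_mul_eq_mul_div, one_mul, div_le_iff₀ (by positivity)]
  linarith

theorem pwSyndetic_hasAPs_and_posBD (A : Set ℕ) (hA : PWSyndetic A) :
    HasAPs A ∧ 0 < BD A :=
  ⟨hA.hasAPs, hA.BD_pos⟩
end
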